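/- arXiv:1910.02753 — 2 statements merged into one kernel-verified Lean document; each statement's English description precedes it below -/
import Mathlib

section
/- For integers 2 ≤ d ≤ n, the integral I_d = ∫_0^1 log(1 + (n-1)t^d) dt satisfies I_d ≤ log((n-1)/e^d) + d/(n-1)^{1/d} + 3/(d·(n-1)^{1/d}). -/
/-!
Let `a = (n - 1)^(-1/d)`, the point where `(n - 1) t^d = 1`, and split the integral at `a`.
Below `a` use `log (1 + x) ≤ x`, above `a` use `log (1 + x) ≤ log x + 1/x`. Both comparison
integrals are explicit and sum to at most `log (n - 1) - d + d a + a/(d + 1) + a/(d - 1)`,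
and `1/(d + 1) + 1/(d - 1) ≤ 3/d` once `d² ≥ 3`.
-/

open Real intervalIntegral

lemma Real.log_one_add_le_log_add_inv {x : ℝ} (hx : 0 < x) : log (1 + x) ≤ log x + x⁻¹ := by
  have h : 1 + x = x * (1 + x⁻¹) := by field_simp; ring
  rw [h, log_mul hx.ne' (by positivity)]
  linarith [log_le_sub_one_of_pos (show 0 < 1 + x⁻¹ by positivity)]

lemma one_div_add_one_add_one_div_sub_one_le {x : ℝ} (hx : 2 ≤ x) :
    1 / (x + 1) + 1 / (x - 1) ≤ 3 / x := by
  rw [div_add_div _ _ (by linarith) (by linarith), div_le_div_iff₀ (by nlinarith) (by linarith)]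
  nlinarith

section

variable {N : ℝ} {d : ℕ}

lemma intervalIntegrable_log_one_add_mul_pow (hN : 0 ≤ N) {a b : ℝ} (ha : 0 ≤ a)
    (hb : 0 ≤ b) :
    IntervalIntegrable (fun t => log (1 + N * t ^ d)) MeasureTheory.volume a b := by
  refine ContinuousOn.intervalIntegrable (ContinuousOn.log (by fun_prop) fun t ht => ?_)
  have : 0 ≤ t := (le_min ha hb).trans ht.1
  positivity

lemma integral_log_one_add_mul_pow_le (hN : 0 ≤ N) {a : ℝ} (ha : 0 ≤ a) :
    ∫ t in 0..a, log (1 + N * t ^ d) ≤ N * a ^ (d + 1) / (d + 1) :=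
  calc ∫ t in 0..a, log (1 + N * t ^ d) ≤ ∫ t in 0..a, N * t ^ d := by
        refine integral_mono_on ha (intervalIntegrable_log_one_add_mul_pow hN le_rfl ha)
          (Continuous.intervalIntegrable (by fun_prop) _ _) fun t ht => ?_
        have : 0 ≤ t := ht.1
        linarith [log_le_sub_one_of_pos (show 0 < 1 + N * t ^ d by positivity)]
    _ = N * a ^ (d + 1) / (d + 1) := by
        rw [integral_const_mul, integral_pow]; simp; ring

lemma log_one_add_mul_pow_le (hN : 0 < N) {t : ℝ} (ht : 0 < t) :
    log (1 + N * t ^ d) ≤ log N + d * log t + N⁻¹ * t ^ (-(d : ℤ)) := by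
  have := log_one_add_le_log_add_inv (show 0 < N * t ^ d by positivity)
  rwa [log_mul hN.ne' (by positivity), log_pow, mul_inv, ← zpow_natCast, ← zpow_neg] at this

lemma integral_log_one_add_mul_pow_le_of_mul_pow_eq_one (hd : 1 < d) {a : ℝ} (ha : 0 < a)
    (ha1 : a ≤ 1) (hNa : N * a ^ d = 1) :
    ∫ t in a..1, log (1 + N * t ^ d) ≤ log N - d + d * a + a / (d - 1) := by
  have hN : 0 < N := pos_of_mul_pos_left (hNa ▸ one_pos) (by positivity)
  have hd' : (1 : ℝ) < d := by exact_mod_cast hd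
  have hlogN : log N = -(d * log a) := by
    rw [← log_pow, eq_neg_iff_add_eq_zero, ← log_mul hN.ne' (by positivity), hNa, log_one]
  have hpow : a ^ (-(d : ℤ) + 1) = N * a := by
    rw [zpow_add_one₀ ha.ne', zpow_neg, zpow_natCast, ← mul_one (a ^ d)⁻¹, ← hNa]
    field_simp
  have hpos : ∀ t ∈ Set.uIcc a 1, 0 < t := fun t ht => ha.trans_le (by simpa [ha1] using ht.1)
  have hlog : IntervalIntegrable (fun t => (d : ℝ) * log t) MeasureTheory.volume a 1 :=
    (ContinuousOn.intervalIntegrable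
      (continuousOn_log.mono fun t ht => (hpos t ht).ne')).const_mul _
  have hzpow : IntervalIntegrable (fun t => N⁻¹ * t ^ (-(d : ℤ))) MeasureTheory.volume a 1 :=
    (ContinuousOn.intervalIntegrable
      (continuousOn_id.zpow₀ _ fun t ht => Or.inl (hpos t ht).ne')).const_mul _
  calc ∫ t in a..1, log (1 + N * t ^ d)
      ≤ ∫ t in a..1, (log N + d * log t + N⁻¹ * t ^ (-(d : ℤ))) :=
        integral_mono_on ha1 (intervalIntegrable_log_one_add_mul_pow hN.le ha.le zero_le_one)
          ((intervalIntegrable_const.add hlog).add hzpow)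
          fun t ht => log_one_add_mul_pow_le hN (ha.trans_le ht.1)
    _ = (1 - a) * log N + d * (-(a * log a) - 1 + a)
          + N⁻¹ * ((1 - a ^ (-(d : ℤ) + 1)) / (-(d : ℤ) + 1 : ℤ)) := by
        rw [integral_add (intervalIntegrable_const.add hlog) hzpow,
          integral_add intervalIntegrable_const hlog, integral_const, integral_const_mul,
          integral_const_mul, integral_log,
          integral_zpow (Or.inr ⟨by omega, Set.notMem_uIcc_of_lt ha one_pos⟩)]
        simp
    _ = log N - d + d * a + (a - N⁻¹) / (d - 1) := by
        have : -(d : ℝ) + 1 ≠ 0 := by linarith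
        have : (d : ℝ) - 1 ≠ 0 := by linarith
        rw [hpow, hlogN]; push_cast; field_simp; ring
    _ ≤ log N - d + d * a + a / (d - 1) := by
        gcongr
        exact sub_le_self _ (inv_pos.2 hN).le

end

open Real in
theorem integral_log_bound_general (n d : ℕ) (hd : 2 ≤ d) (hn : 3 ≤ n) :
    (∫ t in (0:ℝ)..1, Real.log (1 + ((n : ℝ) - 1) * t ^ d)) ≤
      Real.log (((n : ℝ) - 1) / Real.exp d)
        + (d : ℝ) / ((n : ℝ) - 1) ^ (1 / (d : ℝ))
        + 3 / ((d : ℝ) * ((n : ℝ) - 1) ^ (1 / (d : ℝ))) := by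
  set N : ℝ := n - 1
  have hN : 1 ≤ N := by
    have : (3 : ℝ) ≤ n := by exact_mod_cast hn
    linarith
  have hd' : (2 : ℝ) ≤ d := by exact_mod_cast hd
  set a := (N ^ (1 / (d : ℝ)))⁻¹ with ha_def
  have ha : 0 < a := by positivity
  have ha1 : a ≤ 1 := inv_le_one_of_one_le₀ (one_le_rpow hN (by positivity))
  have hNa : N * a ^ d = 1 := by
    rw [inv_pow, ← rpow_natCast, ← rpow_mul (by linarith), one_div_mul_cancel (by positivity),
      rpow_one, mul_inv_cancel₀ (by positivity)]
  have head : ∫ t in 0..a, log (1 + N * t ^ d) ≤ a / (d + 1) := by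
    simpa [pow_succ, ← mul_assoc, hNa] using
      integral_log_one_add_mul_pow_le (N := N) (d := d) (by linarith) ha.le
  have tail := integral_log_one_add_mul_pow_le_of_mul_pow_eq_one (by omega) ha ha1 hNa
  have hsum : a / (d + 1) + a / (d - 1) ≤ a * (3 / d) := by
    simpa only [mul_add, mul_one_div] using
      mul_le_mul_of_nonneg_left (one_div_add_one_add_one_div_sub_one_le hd') ha.le
  have hRHS : log (N / exp d) + d / N ^ (1 / (d : ℝ)) + 3 / (d * N ^ (1 / (d : ℝ)))
      = log N - d + d * a + a * (3 / d) := by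
    rw [log_div (by positivity) (exp_ne_zero _), log_exp, ha_def]
    field_simp
  rw [hRHS, ← integral_add_adjacent_intervals
    (intervalIntegrable_log_one_add_mul_pow (by linarith) le_rfl ha.le)
    (intervalIntegrable_log_one_add_mul_pow (by linarith) ha.le zero_le_one)]
  linarith

open Real in
theorem integral_log_bound (n d : ℕ) (hd : 2 ≤ d) (hdn : d ≤ n) (hn : 3 ≤ n) :
    (∫ t in (0:ℝ)..1, Real.log (1 + ((n : ℝ) - 1) * t ^ d)) ≤
      Real.log (((n : ℝ) - 1) / Real.exp d)
        + (d : ℝ) / ((n : ℝ) - 1) ^ (1 / (d : ℝ))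
        + 3 / ((d : ℝ) * ((n : ℝ) - 1) ^ (1 / (d : ℝ))) :=
  integral_log_bound_general n d hd hn
end

section
/- Let L be a Latin square of order m ≥ 2 with at least q orthogonal mates, where q ≥ 1. Then for every k ≥ 1, the k-fold Kronecker power L^{⊗k} has at least q^{(m^{2k}-1)/(m²-1)} orthogonal mates. -/
/-- A Latin square on index set `I` with symbols `A`. -/
def IsLatin {I A : Type*} (M : I → I → A) : Prop :=
  (∀ i, Function.Bijective (M i)) ∧ (∀ j, Function.Bijective fun i => M i j)

/-- Orthogonality: the pair map is a bijection. -/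
def IsOrthogonal {I A : Type*} (M M' : I → I → A) : Prop :=
  Function.Bijective fun p : I × I => (M p.1 p.2, M' p.1 p.2)

/-- The `k`-fold Kronecker power of a Latin square of order `m`, with rows,
columns and symbols indexed by `Fin k → Fin m` (i.e. `[m]^k ≅ [m^k]`):
`L^{⊗k}((i₁,…,i_k),(j₁,…,j_k)) = (L(i₁,j₁),…,L(i_k,j_k))`. -/
def kronPow {m : ℕ} (L : Fin m → Fin m → Fin m) (k : ℕ) :
    (Fin k → Fin m) → (Fin k → Fin m) → (Fin k → Fin m) :=
  fun r c t => L (r t) (c t)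

/-- The number of orthogonal mates of a square `M`. -/
noncomputable def numMates {I A : Type*} (M : I → I → A) : ℕ :=
  Nat.card {M' : I → I → A // IsLatin M' ∧ IsOrthogonal M M'}

section Transport

variable {I A J B : Type*} (e : J ≃ I) (ea : A ≃ B)

/-- Relabel rows/columns by `e` and symbols by `ea`. -/
def transportSq (M : I → I → A) : J → J → B := fun j j' => ea (M (e j) (e j'))

lemma isLatin_transport {M : I → I → A} (h : IsLatin M) : IsLatin (transportSq e ea M) := by
  constructor
  · intro j
    have hfun : (transportSq e ea M j) = ⇑ea ∘ (M (e j)) ∘ ⇑e := rfl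
    rw [hfun]
    exact ea.bijective.comp ((h.1 (e j)).comp e.bijective)
  · intro j'
    have hfun : (fun j => transportSq e ea M j j') = ⇑ea ∘ (fun i => M i (e j')) ∘ ⇑e := rfl
    rw [hfun]
    exact ea.bijective.comp ((h.2 (e j')).comp e.bijective)

lemma isOrthogonal_transport {M M' : I → I → A} (h : IsOrthogonal M M') :
    IsOrthogonal (transportSq e ea M) (transportSq e ea M') := by
  have hfun : (fun p : J × J => (transportSq e ea M p.1 p.2, transportSq e ea M' p.1 p.2))
      = (Prod.map ⇑ea ⇑ea) ∘ (fun p : I × I => (M p.1 p.2, M' p.1 p.2))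
        ∘ (Prod.map ⇑e ⇑e) := rfl
  rw [IsOrthogonal, hfun]
  exact (ea.bijective.prodMap ea.bijective).comp (h.comp (e.bijective.prodMap e.bijective))

lemma numMates_le_transport [Finite J] [Finite B] (M : I → I → A) :
    numMates M ≤ numMates (transportSq e ea M) := by
  have hinj : Function.Injective
      (fun M' : {M' : I → I → A // IsLatin M' ∧ IsOrthogonal M M'} =>
        (⟨transportSq e ea M'.1, isLatin_transport e ea M'.2.1,
          isOrthogonal_transport e ea M'.2.2⟩ :
          {N : J → J → B // IsLatin N ∧ IsOrthogonal (transportSq e ea M) N})) := by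
    rintro ⟨M₁, _⟩ ⟨M₂, _⟩ h
    simp only [Subtype.mk.injEq] at h ⊢
    funext i i'
    have h2 := congrFun (congrFun h (e.symm i)) (e.symm i')
    simp only [transportSq, Equiv.apply_symm_apply] at h2
    exact ea.injective h2
  exact Nat.card_le_card_of_injective _ hinj

end Transport

section Kron

variable {I₁ A₁ I₂ A₂ : Type*}

/-- Kronecker product of two squares. -/
def kronSq (M₁ : I₁ → I₁ → A₁) (M₂ : I₂ → I₂ → A₂) :
    I₁ × I₂ → I₁ × I₂ → A₁ × A₂ := fun r c => (M₁ r.1 c.1, M₂ r.2 c.2)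

lemma numMates_kron [Finite I₁] [Finite A₁] [Finite I₂] [Finite A₂] [Nonempty I₂]
    (M₁ : I₁ → I₁ → A₁) (M₂ : I₂ → I₂ → A₂) :
    numMates M₁ * numMates M₂ ^ (Nat.card I₁ * Nat.card I₁) ≤ numMates (kronSq M₁ M₂) := by
  classical
  set S₁ := {M' : I₁ → I₁ → A₁ // IsLatin M' ∧ IsOrthogonal M₁ M'}
  set S₂ := {g : I₂ → I₂ → A₂ // IsLatin g ∧ IsOrthogonal M₂ g}
  -- the combined square built from a mate of `M₁` and a cell-indexed family of mates of `M₂`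
  set T := {N : I₁ × I₂ → I₁ × I₂ → A₁ × A₂ // IsLatin N ∧ IsOrthogonal (kronSq M₁ M₂) N}
  have build : ∀ (M' : S₁) (f : I₁ → I₁ → S₂),
      IsLatin (fun r c : I₁ × I₂ => (M'.1 r.1 c.1, (f r.1 c.1).1 r.2 c.2)) ∧
      IsOrthogonal (kronSq M₁ M₂)
        (fun r c : I₁ × I₂ => (M'.1 r.1 c.1, (f r.1 c.1).1 r.2 c.2)) := by
    rintro ⟨M', hM'L, hM'O⟩ f
    refine ⟨⟨?_, ?_⟩, ?_, ?_⟩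
    · rintro ⟨i₁, i₂⟩
      constructor
      · rintro ⟨j₁, j₂⟩ ⟨j₁', j₂'⟩ h
        simp only [Prod.mk.injEq] at h
        obtain ⟨h1, h2⟩ := h
        have e1 : j₁ = j₁' := (hM'L.1 i₁).injective h1
        subst e1
        have e2 : j₂ = j₂' := ((f i₁ j₁).2.1.1 i₂).injective h2
        simp [e2]
      · rintro ⟨a₁, a₂⟩
        obtain ⟨j₁, hj₁⟩ := (hM'L.1 i₁).surjective a₁
        obtain ⟨j₂, hj₂⟩ := ((f i₁ j₁).2.1.1 i₂).surjective a₂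
        exact ⟨(j₁, j₂), by simp [hj₁, hj₂]⟩
    · rintro ⟨j₁, j₂⟩
      constructor
      · rintro ⟨i₁, i₂⟩ ⟨i₁', i₂'⟩ h
        simp only [Prod.mk.injEq] at h
        obtain ⟨h1, h2⟩ := h
        have e1 : i₁ = i₁' := (hM'L.2 j₁).injective h1
        subst e1
        have e2 : i₂ = i₂' := ((f i₁ j₁).2.1.2 j₂).injective h2
        simp [e2]
      · rintro ⟨a₁, a₂⟩
        obtain ⟨i₁, hi₁⟩ := (hM'L.2 j₁).surjective a₁
        obtain ⟨i₂, hi₂⟩ := ((f i₁ j₁).2.1.2 j₂).surjective a₂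
        exact ⟨(i₁, i₂), by simp_all⟩
    · rintro ⟨⟨i₁, i₂⟩, ⟨j₁, j₂⟩⟩ ⟨⟨i₁', i₂'⟩, ⟨j₁', j₂'⟩⟩ h
      simp only [kronSq, Prod.mk.injEq] at h
      obtain ⟨⟨h1, h2⟩, h3, h4⟩ := h
      have e1 : ((i₁, j₁) : I₁ × I₁) = (i₁', j₁') := hM'O.injective (by simp [h1, h3])
      simp only [Prod.mk.injEq] at e1
      obtain ⟨e1a, e1b⟩ := e1
      subst e1a; subst e1b
      have e2 : ((i₂, j₂) : I₂ × I₂) = (i₂', j₂') := (f i₁ j₁).2.2.injective (by simp [h2, h4])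
      simp only [Prod.mk.injEq] at e2
      simp [e2.1, e2.2]
    · rintro ⟨⟨a₁, a₂⟩, ⟨b₁, b₂⟩⟩
      obtain ⟨⟨i₁, j₁⟩, hp⟩ := hM'O.surjective (a₁, b₁)
      obtain ⟨⟨i₂, j₂⟩, hq⟩ := (f i₁ j₁).2.2.surjective (a₂, b₂)
      refine ⟨((i₁, i₂), (j₁, j₂)), ?_⟩
      simp only [Prod.mk.injEq] at hp hq
      simp [kronSq, hp.1, hp.2, hq.1, hq.2]
  let Φ : S₁ × (I₁ → I₁ → S₂) → T := fun x =>
    ⟨fun r c => (x.1.1 r.1 c.1, (x.2 r.1 c.1).1 r.2 c.2), build x.1 x.2⟩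
  have hΦ : Function.Injective Φ := by
    rintro ⟨M', f⟩ ⟨M'', g⟩ h
    obtain ⟨i₂0⟩ := ‹Nonempty I₂›
    have h0 : (fun r c : I₁ × I₂ => (M'.1 r.1 c.1, (f r.1 c.1).1 r.2 c.2))
        = (fun r c : I₁ × I₂ => (M''.1 r.1 c.1, (g r.1 c.1).1 r.2 c.2)) :=
      congrArg Subtype.val h
    have hM : M' = M'' := by
      apply Subtype.ext; funext i₁ j₁
      exact congrArg Prod.fst (congrFun (congrFun h0 (i₁, i₂0)) (j₁, i₂0))
    have hf : f = g := by
      funext i₁ j₁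
      apply Subtype.ext; funext i₂ j₂
      exact congrArg Prod.snd (congrFun (congrFun h0 (i₁, i₂)) (j₁, j₂))
    simp [hM, hf]
  have hcard := Nat.card_le_card_of_injective Φ hΦ
  calc numMates M₁ * numMates M₂ ^ (Nat.card I₁ * Nat.card I₁)
      = Nat.card (S₁ × (I₁ → I₁ → S₂)) := by
        rw [Nat.card_prod, Nat.card_fun, Nat.card_fun, ← pow_mul]
        rfl
    _ ≤ Nat.card T := hcard
    _ = numMates (kronSq M₁ M₂) := rfl

end Kron

lemma isLatin_kronPow {m : ℕ} {L : Fin m → Fin m → Fin m} (hL : IsLatin L) (k : ℕ) :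
    IsLatin (kronPow L k) := by
  constructor
  · intro r
    constructor
    · intro c c' h
      funext t
      exact (hL.1 (r t)).injective (congrFun h t)
    · intro s
      refine ⟨fun t => (Equiv.ofBijective _ (hL.1 (r t))).symm (s t), ?_⟩
      funext t
      exact (Equiv.ofBijective _ (hL.1 (r t))).apply_symm_apply (s t)
  · intro c
    constructor
    · intro r r' h
      funext t
      exact (hL.2 (c t)).injective (congrFun h t)
    · intro s
      refine ⟨fun t => (Equiv.ofBijective _ (hL.2 (c t))).symm (s t), ?_⟩
      funext t
      exact (Equiv.ofBijective _ (hL.2 (c t))).apply_symm_apply (s t)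

lemma kronPow_succ_eq {m : ℕ} (L : Fin m → Fin m → Fin m) (k : ℕ) :
    kronPow L (k + 1) =
      transportSq (Fin.consEquiv (fun _ : Fin (k + 1) => Fin m)).symm
        (Fin.consEquiv (fun _ : Fin (k + 1) => Fin m))
        (kronSq L (kronPow L k)) := by
  funext r c t
  simp only [transportSq, kronSq, Fin.consEquiv, Equiv.coe_fn_mk, Equiv.coe_fn_symm_mk]
  refine Fin.cases ?_ ?_ t
  · simp [kronPow]
  · intro i
    simp [kronPow, Fin.tail]

lemma geom_exp_succ {m k : ℕ} (hm : 2 ≤ m) :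
    (m ^ (2 * (k + 1)) - 1) / (m ^ 2 - 1) =
      m ^ 2 * ((m ^ (2 * k) - 1) / (m ^ 2 - 1)) + 1 := by
  have hm4 : 4 ≤ m ^ 2 := by nlinarith
  have hd : 0 < m ^ 2 - 1 := by omega
  have hdvd : (m ^ 2 - 1) ∣ m ^ (2 * k) - 1 := by
    have := Nat.sub_dvd_pow_sub_pow (m ^ 2) 1 k
    simpa [pow_mul, one_pow] using this
  obtain ⟨t, ht⟩ := hdvd
  have h1 : 1 ≤ m ^ (2 * k) := Nat.one_le_pow _ _ (by omega)
  have h2 : m ^ (2 * k) = (m ^ 2 - 1) * t + 1 := by omega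
  have h3 : m ^ (2 * (k + 1)) = m ^ (2 * k) * m ^ 2 := by
    rw [show 2 * (k + 1) = 2 * k + 2 by ring, pow_add]
  have h4 : m ^ (2 * (k + 1)) - 1 = (m ^ 2 - 1) * (t * m ^ 2 + 1) := by
    rw [h3, h2]
    have e1 : ((m ^ 2 - 1) * t + 1) * m ^ 2 = (m ^ 2 - 1) * (t * m ^ 2 + 1) + 1 := by
      have e2 : (m ^ 2 - 1) * (t * m ^ 2 + 1) + 1 = (m ^ 2 - 1) * t * m ^ 2 + ((m ^ 2 - 1) + 1) := by
        ring
      have e3 : (m ^ 2 - 1) + 1 = m ^ 2 := by omega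
      rw [e2, e3]; ring
    omega
  rw [h4, ht, Nat.mul_div_cancel_left _ hd, Nat.mul_div_cancel_left _ hd]
  ring

lemma kronPow_numMates_aux {m q : ℕ} (hm : 2 ≤ m) (hq : 1 ≤ q)
    (L : Fin m → Fin m → Fin m) (hL : IsLatin L) (hmates : q ≤ numMates L) (k : ℕ) :
    q ^ ((m ^ (2 * k) - 1) / (m ^ 2 - 1)) ≤ numMates (kronPow L k) := by
  have hmpos : 0 < m := by omega
  have hne : Nonempty (Fin m) := ⟨⟨0, hmpos⟩⟩
  induction k with
  | zero =>
      simp only [Nat.mul_zero, pow_zero, Nat.sub_self, Nat.zero_div]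
      -- numMates (kronPow L 0) ≥ 1 : the square itself is a mate
      have hmem : IsLatin (kronPow L 0) ∧ IsOrthogonal (kronPow L 0) (kronPow L 0) := by
        constructor
        · exact isLatin_kronPow hL 0
        · constructor
          · intro p p' _
            apply Prod.ext <;> · funext t; exact absurd t.2 (by omega)
          · intro b
            refine ⟨(fun t => t.elim0, fun t => t.elim0), ?_⟩
            apply Prod.ext <;> · funext t; exact absurd t.2 (by omega)
      have : Nonempty {M' : (Fin 0 → Fin m) → (Fin 0 → Fin m) → (Fin 0 → Fin m) //
          IsLatin M' ∧ IsOrthogonal (kronPow L 0) M'} := ⟨⟨kronPow L 0, hmem⟩⟩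
      exact Nat.one_le_iff_ne_zero.mpr (Nat.card_ne_zero.mpr ⟨this, inferInstance⟩)
  | succ k ih =>
      rw [geom_exp_succ hm]
      have step1 : numMates (kronSq L (kronPow L k)) ≤ numMates (kronPow L (k + 1)) := by
        rw [kronPow_succ_eq]
        exact numMates_le_transport _ _ _
      have step2 : numMates L * numMates (kronPow L k) ^
          (Nat.card (Fin m) * Nat.card (Fin m)) ≤ numMates (kronSq L (kronPow L k)) :=
        numMates_kron L (kronPow L k)
      have hcard : Nat.card (Fin m) = m := Nat.card_eq_of_equiv_fin (Equiv.refl _)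
      rw [hcard] at step2
      calc q ^ (m ^ 2 * ((m ^ (2 * k) - 1) / (m ^ 2 - 1)) + 1)
          = q * (q ^ ((m ^ (2 * k) - 1) / (m ^ 2 - 1))) ^ (m * m) := by
            rw [← pow_mul, pow_add, pow_one, mul_comm (q ^ _) q, sq]
            ring_nf
        _ ≤ numMates L * numMates (kronPow L k) ^ (m * m) := by
            exact Nat.mul_le_mul hmates (Nat.pow_le_pow_left ih _)
        _ ≤ numMates (kronSq L (kronPow L k)) := step2
        _ ≤ numMates (kronPow L (k + 1)) := step1

theorem kronPow_numMates {m k q : ℕ} (hm : 2 ≤ m) (hk : 1 ≤ k) (hq : 1 ≤ q)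
    (L : Fin m → Fin m → Fin m) (hL : IsLatin L) (hmates : q ≤ numMates L) :
    q ^ ((m ^ (2 * k) - 1) / (m ^ 2 - 1)) ≤ numMates (kronPow L k) := by
  exact kronPow_numMates_aux hm hq L hL hmates k
end
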